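/- Let X and M be m×n real matrices with m ≤ n and m even, and let k be an integer with 1 ≤ k ≤ m/2 − 1. Then (λ_{m/2}(X) − λ_{m/2}(X − M))² ≤ 2·max{(λ_{m/2 − k}(X − M) − λ_{m/2}(X − M))², (λ_{m/2 + k}(X − M) − λ_{m/2}(X − M))²} + 2 λ_{k+1}(M)². -/

import Mathlib

/-!
Both one-sided bounds are instances of Weyl's inequality `λ_{i+j-1}(A + B) ≤ λ_i(A) + λ_j(B)`:
`X = (X - M) + M` with `(i, j) = (m/2 - k, k + 1)` bounds `λ_{m/2}(X) - λ_{m/2}(X - M)` above by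
`λ_{m/2-k}(X - M) - λ_{m/2}(X - M) + λ_{k+1}(M)`, and `X - M = X + (-M)` with `(i, j) = (m/2, k + 1)`
bounds it below by `λ_{m/2+k}(X - M) - λ_{m/2}(X - M) - λ_{k+1}(M)`; then `(a + b)² ≤ 2a² + 2b²`.

Weyl's inequality is proved by Courant–Fischer: spanning eigenvectors of `C Cᴴ` below or above
the relevant eigenvalue gives subspaces of dimension `i + j - 1`, `m - i + 1`, `m - j + 1` on which
`x ↦ ‖(A + B)ᴴ x‖`, `‖Aᴴ x‖`, `‖Bᴴ x‖` are bounded by the singular value times `‖x‖` from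
below, above, above. Their dimensions add up to `2m + 1`, so they share a nonzero `x`, and the
triangle inequality `‖(A + B)ᴴ x‖ ≤ ‖Aᴴ x‖ + ‖Bᴴ x‖` at that `x` compares the three singular values.
-/

open MeasureTheory ProbabilityTheory Filter Matrix

noncomputable section

/-- Singular values of a real `m × n` matrix, in decreasing order (`0`-indexed):
`svalsDesc A 0 ≥ svalsDesc A 1 ≥ …` (the square roots of the eigenvalues of `A Aᵀ`). -/
def svalsDesc {m n : ℕ} (A : Matrix (Fin m) (Fin n) ℝ) : Fin m → ℝ := fun i =>
  let hA : (A * Aᴴ).IsHermitian := Matrix.isHermitian_mul_conjTranspose_self A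
  Real.sqrt (hA.eigenvalues (Tuple.sort hA.eigenvalues i.rev))

/-- `sval A k` is the `k`-th largest singular value `λ_k(A)` (`1`-indexed), with junk
value `0` if `k` is out of range. -/
def sval {m n : ℕ} (A : Matrix (Fin m) (Fin n) ℝ) (k : ℕ) : ℝ :=
  if h : k - 1 < m then svalsDesc A ⟨k - 1, h⟩ else 0

/-- Nuclear norm `‖A‖_* = Σ_i λ_i(A)`. -/
def nuclearNorm {m n : ℕ} (A : Matrix (Fin m) (Fin n) ℝ) : ℝ :=
  ∑ i : Fin m, svalsDesc A i

/-- Squared Frobenius norm `‖A‖_F² = Σ_{ij} A_{ij}²`. -/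
def frobSq {m n : ℕ} (A : Matrix (Fin m) (Fin n) ℝ) : ℝ :=
  ∑ i : Fin m, ∑ j : Fin n, (A i j) ^ 2

/-- Operator (spectral) norm: the largest singular value. -/
def opNorm {m n : ℕ} (A : Matrix (Fin m) (Fin n) ℝ) : ℝ := sval A 1

/-- Density of the Marčenko–Pastur distribution with parameter `γ`:
`(1/(2πγx))·√((γ₊ − x)(x − γ₋))` on `[γ₋, γ₊]`, where `γ± = (1 ± √γ)²`. -/
def mpDensity (γ : ℝ) (x : ℝ) : ℝ :=
  if (1 - Real.sqrt γ) ^ 2 ≤ x ∧ x ≤ (1 + Real.sqrt γ) ^ 2 then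
    Real.sqrt (((1 + Real.sqrt γ) ^ 2 - x) * (x - (1 - Real.sqrt γ) ^ 2)) / (2 * Real.pi * γ * x)
  else 0

/-- CDF `F_γ` of the Marčenko–Pastur distribution with parameter `γ`. -/
def mpCDF (γ : ℝ) (x : ℝ) : ℝ := ∫ t in Set.Iic x, mpDensity γ t

/-- Quantile function `F⁻¹(p) = inf {x | F x ≥ p}`. -/
def quantileOf (F : ℝ → ℝ) (p : ℝ) : ℝ := sInf {x | p ≤ F x}

/-- Quantile function of the Marčenko–Pastur distribution. -/
def mpQuantile (γ : ℝ) (p : ℝ) : ℝ := quantileOf (mpCDF γ) p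

/-- `μ_γ = F_γ⁻¹(1/2)`, the median of the Marčenko–Pastur distribution. -/
def mpMedian (γ : ℝ) : ℝ := mpQuantile γ (1 / 2)

/-- A law on `ℝ` is sub-Gaussian if its moment generating function satisfies a
sub-Gaussian bound. -/
def IsSubGaussianLaw (ν : Measure ℝ) : Prop :=
  ∃ c > 0, ∀ t : ℝ, ∫ x, Real.exp (t * x) ∂ν ≤ Real.exp (c * t ^ 2)

/-- The entries of the random matrix `A` are i.i.d. with common law `ν`. -/
def IIDEntries {Ω : Type*} [MeasurableSpace Ω] (μ : Measure Ω) {m n : ℕ}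
    (A : Ω → Matrix (Fin m) (Fin n) ℝ) (ν : Measure ℝ) : Prop :=
  (∀ i j, Measurable fun ω => A ω i j) ∧
  (∀ i j, Measure.map (fun ω => A ω i j) μ = ν) ∧
  iIndepFun (fun (p : Fin m × Fin n) ω => A ω p.1 p.2) μ

/-- The Gavish–Donoho estimator `σ̂ = λ_{m/2}(X) / √(n μ_γ)` (the median singular value,
`m` even, normalized by `√(n μ_γ)`). -/
def sigmaHat {m n : ℕ} (γ : ℝ) (X : Matrix (Fin m) (Fin n) ℝ) : ℝ :=
  sval X (m / 2) / Real.sqrt (n * mpMedian γ)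

/-- `u`, `v` together with the singular values of `X` form a singular value
decomposition `X = Σ_i λ_i(X) uᵢ vᵢᵀ` of `X` (with `uᵢ`, `vᵢ` orthonormal families). -/
def IsSVD {m n : ℕ} (X : Matrix (Fin m) (Fin n) ℝ)
    (u : Fin m → Fin m → ℝ) (v : Fin m → Fin n → ℝ) : Prop :=
  (∀ i j, ∑ k, u i k * u j k = if i = j then 1 else 0) ∧
  (∀ i j, ∑ k, v i k * v j k = if i = j then 1 else 0) ∧
  X = ∑ i : Fin m, svalsDesc X i • Matrix.vecMulVec (u i) (v i)

/-- Singular value thresholding: keep the part of the SVD `X = Σ_i λ_i(X) uᵢ vᵢᵀ`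
with singular values `≥ τ`.  With `τ = (2+η) σ̂ √n` this is the modified USVT
estimator `M̂`. -/
def usvtFrom {m n : ℕ} (X : Matrix (Fin m) (Fin n) ℝ)
    (u : Fin m → Fin m → ℝ) (v : Fin m → Fin n → ℝ) (τ : ℝ) : Matrix (Fin m) (Fin n) ℝ :=
  ∑ i ∈ Finset.univ.filter (fun i => τ ≤ svalsDesc X i),
    svalsDesc X i • Matrix.vecMulVec (u i) (v i)

open scoped InnerProductSpace

namespace Submodule

variable {K V : Type*} [DivisionRing K] [AddCommGroup V] [Module K V] [FiniteDimensional K V]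

theorem finrank_add_finrank_le_finrank_add_finrank_inf (U W : Submodule K V) :
    Module.finrank K U + Module.finrank K W ≤
      Module.finrank K V + Module.finrank K ↥(U ⊓ W) := by
  rw [← finrank_sup_add_finrank_inf_eq]
  exact Nat.add_le_add_right (finrank_le _) _

theorem exists_ne_zero_mem_inf_inf_of_two_mul_finrank_lt (U₁ U₂ U₃ : Submodule K V)
    (h : 2 * Module.finrank K V <
      Module.finrank K U₁ + Module.finrank K U₂ + Module.finrank K U₃) :
    ∃ x ≠ (0 : V), x ∈ U₁ ⊓ U₂ ⊓ U₃ := by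
  have h₁₂ := finrank_add_finrank_le_finrank_add_finrank_inf U₁ U₂
  have h₁₂₃ := finrank_add_finrank_le_finrank_add_finrank_inf (U₁ ⊓ U₂) U₃
  have hpos : 0 < Module.finrank K ↥(U₁ ⊓ U₂ ⊓ U₃) := by omega
  obtain ⟨x, hx, hx0⟩ := (Submodule.ne_bot_iff (U₁ ⊓ U₂ ⊓ U₃)).mp fun h ↦ by
    rw [h, finrank_bot] at hpos
    exact hpos.false
  exact ⟨x, hx0, hx⟩

end Submodule

section Rayleigh

variable {E ι : Type*} [NormedAddCommGroup E] [InnerProductSpace ℝ E] {T : E →ₗ[ℝ] E}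
  {v : ι → E} {μ : ι → ℝ} {s : Set ι} {x : E} {t : ℝ}

theorem Orthonormal.exists_norm_sq_eq_sum_and_inner_map_self_eq_sum (hv : Orthonormal ℝ v)
    (hT : ∀ i, T (v i) = μ i • v i) (hx : x ∈ Submodule.span ℝ (v '' s)) :
    ∃ (u : Finset ι) (c : ι → ℝ), ↑u ⊆ s ∧ ‖x‖ ^ 2 = ∑ i ∈ u, c i ^ 2 ∧
      ⟪T x, x⟫_ℝ = ∑ i ∈ u, μ i * c i ^ 2 := by
  obtain ⟨l, hls, rfl⟩ := (Finsupp.mem_span_image_iff_linearCombination ℝ).mp hx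
  refine ⟨l.support, l, hls, ?_, ?_⟩
  · rw [← real_inner_self_eq_norm_sq, Finsupp.linearCombination_apply, Finsupp.sum,
      hv.inner_sum]
    simp [sq]
  · have hTl : T (Finsupp.linearCombination ℝ v l) = ∑ i ∈ l.support, (μ i * l i) • v i := by
      simp [Finsupp.linearCombination_apply, Finsupp.sum, hT, smul_smul, mul_comm]
    rw [hTl, Finsupp.linearCombination_apply, Finsupp.sum, hv.inner_sum]
    simp [sq, mul_assoc]


theorem Orthonormal.mul_norm_sq_le_inner_map_self (hv : Orthonormal ℝ v)
    (hT : ∀ i, T (v i) = μ i • v i) (ht : ∀ i ∈ s, t ≤ μ i)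
    (hx : x ∈ Submodule.span ℝ (v '' s)) : t * ‖x‖ ^ 2 ≤ ⟪T x, x⟫_ℝ := by
  obtain ⟨u, c, hus, hnorm, hinner⟩ := hv.exists_norm_sq_eq_sum_and_inner_map_self_eq_sum hT hx
  rw [hnorm, hinner, Finset.mul_sum]
  exact Finset.sum_le_sum fun i hi ↦
    mul_le_mul_of_nonneg_right (ht i (hus hi)) (sq_nonneg _)

theorem Orthonormal.inner_map_self_le_mul_norm_sq (hv : Orthonormal ℝ v)
    (hT : ∀ i, T (v i) = μ i • v i) (ht : ∀ i ∈ s, μ i ≤ t)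
    (hx : x ∈ Submodule.span ℝ (v '' s)) : ⟪T x, x⟫_ℝ ≤ t * ‖x‖ ^ 2 := by
  obtain ⟨u, c, hus, hnorm, hinner⟩ := hv.exists_norm_sq_eq_sum_and_inner_map_self_eq_sum hT hx
  rw [hnorm, hinner, Finset.mul_sum]
  exact Finset.sum_le_sum fun i hi ↦
    mul_le_mul_of_nonneg_right (ht i (hus hi)) (sq_nonneg _)

end Rayleigh

theorem LinearIndependent.finrank_span_image_finset {K V ι : Type*} [DivisionRing K]
    [AddCommGroup V] [Module K V] {v : ι → V} (hv : LinearIndependent K v) (s : Finset ι) :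
    Module.finrank K (Submodule.span K (v '' s)) = s.card := by
  rw [Set.image_eq_range]
  exact (finrank_span_eq_card (hv.comp _ Subtype.val_injective)).trans (Fintype.card_coe s)

section SingularValues

variable {m n : ℕ} (A : Matrix (Fin m) (Fin n) ℝ)

def gramEigenvalueAsc (i : Fin m) : ℝ :=
  (isHermitian_mul_conjTranspose_self A).eigenvalues
    (Tuple.sort (isHermitian_mul_conjTranspose_self A).eigenvalues i)

def gramEigenvectorAsc (i : Fin m) : EuclideanSpace ℝ (Fin m) :=
  (isHermitian_mul_conjTranspose_self A).eigenvectorBasis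
    (Tuple.sort (isHermitian_mul_conjTranspose_self A).eigenvalues i)

theorem monotone_gramEigenvalueAsc : Monotone (gramEigenvalueAsc A) :=
  Tuple.monotone_sort _

theorem gramEigenvalueAsc_nonneg (i : Fin m) : 0 ≤ gramEigenvalueAsc A i :=
  (posSemidef_self_mul_conjTranspose A).eigenvalues_nonneg _

theorem svalsDesc_nonneg (i : Fin m) : 0 ≤ svalsDesc A i :=
  Real.sqrt_nonneg _

theorem sq_svalsDesc (i : Fin m) : svalsDesc A i ^ 2 = gramEigenvalueAsc A i.rev :=
  Real.sq_sqrt (gramEigenvalueAsc_nonneg A i.rev)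

theorem orthonormal_gramEigenvectorAsc : Orthonormal ℝ (gramEigenvectorAsc A) :=
  (isHermitian_mul_conjTranspose_self A).eigenvectorBasis.orthonormal.comp _
    (Tuple.sort _).injective

theorem toEuclideanLin_gramEigenvectorAsc (i : Fin m) :
    toEuclideanLin (A * Aᴴ) (gramEigenvectorAsc A i) =
      gramEigenvalueAsc A i • gramEigenvectorAsc A i := by
  ext j
  exact congrFun ((isHermitian_mul_conjTranspose_self A).mulVec_eigenvectorBasis _) j

theorem inner_toEuclideanLin_mul_conjTranspose_self (x : EuclideanSpace ℝ (Fin m)) :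
    ⟪toEuclideanLin (A * Aᴴ) x, x⟫_ℝ = ‖toEuclideanLin Aᴴ x‖ ^ 2 := by
  rw [← real_inner_self_eq_norm_sq, toLpLin_mul_same, LinearMap.comp_apply,
    toEuclideanLin_conjTranspose_eq_adjoint, LinearMap.adjoint_inner_right]

theorem exists_finrank_eq_forall_svalsDesc_mul_norm_le (i : Fin m) :
    ∃ V : Submodule ℝ (EuclideanSpace ℝ (Fin m)), Module.finrank ℝ V = i + 1 ∧
      ∀ x ∈ V, svalsDesc A i * ‖x‖ ≤ ‖toEuclideanLin Aᴴ x‖ := by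
  have hv := orthonormal_gramEigenvectorAsc A
  refine ⟨Submodule.span ℝ (gramEigenvectorAsc A '' ↑(Finset.Ici i.rev)), ?_, fun x hx ↦ ?_⟩
  · rw [hv.linearIndependent.finrank_span_image_finset, Fin.card_Ici, Fin.val_rev]
    omega
  · have h := hv.mul_norm_sq_le_inner_map_self (toEuclideanLin_gramEigenvectorAsc A)
      (fun j hj ↦ monotone_gramEigenvalueAsc A (Finset.mem_Ici.mp hj)) hx
    rw [inner_toEuclideanLin_mul_conjTranspose_self, ← sq_svalsDesc, ← mul_pow] at h
    exact (sq_le_sq₀ (mul_nonneg (svalsDesc_nonneg A i) (norm_nonneg x)) (norm_nonneg _)).mp h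

theorem exists_finrank_eq_forall_norm_le_svalsDesc_mul (i : Fin m) :
    ∃ V : Submodule ℝ (EuclideanSpace ℝ (Fin m)), Module.finrank ℝ V = m - i ∧
      ∀ x ∈ V, ‖toEuclideanLin Aᴴ x‖ ≤ svalsDesc A i * ‖x‖ := by
  have hv := orthonormal_gramEigenvectorAsc A
  refine ⟨Submodule.span ℝ (gramEigenvectorAsc A '' ↑(Finset.Iic i.rev)), ?_, fun x hx ↦ ?_⟩
  · rw [hv.linearIndependent.finrank_span_image_finset, Fin.card_Iic, Fin.val_rev]
    omega
  · have h := hv.inner_map_self_le_mul_norm_sq (toEuclideanLin_gramEigenvectorAsc A)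
      (fun j hj ↦ monotone_gramEigenvalueAsc A (Finset.mem_Iic.mp hj)) hx
    rw [inner_toEuclideanLin_mul_conjTranspose_self, ← sq_svalsDesc, ← mul_pow] at h
    exact (sq_le_sq₀ (norm_nonneg _) (mul_nonneg (svalsDesc_nonneg A i) (norm_nonneg x))).mp h

theorem svalsDesc_add_le (B : Matrix (Fin m) (Fin n) ℝ) {i j t : Fin m}
    (ht : (t : ℕ) = i + j) : svalsDesc (A + B) t ≤ svalsDesc A i + svalsDesc B j := by
  obtain ⟨V, hV, hAB⟩ := exists_finrank_eq_forall_svalsDesc_mul_norm_le (A + B) t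
  obtain ⟨W₁, hW₁, hA⟩ := exists_finrank_eq_forall_norm_le_svalsDesc_mul A i
  obtain ⟨W₂, hW₂, hB⟩ := exists_finrank_eq_forall_norm_le_svalsDesc_mul B j
  obtain ⟨x, hx0, ⟨hxV, hxW₁⟩, hxW₂⟩ :=
    Submodule.exists_ne_zero_mem_inf_inf_of_two_mul_finrank_lt V W₁ W₂ (by
      rw [finrank_euclideanSpace_fin, hV, hW₁, hW₂]
      omega)
  refine le_of_mul_le_mul_right ?_ (norm_pos_iff.mpr hx0)
  calc svalsDesc (A + B) t * ‖x‖ ≤ ‖toEuclideanLin (A + B)ᴴ x‖ := hAB x hxV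
    _ = ‖toEuclideanLin Aᴴ x + toEuclideanLin Bᴴ x‖ := by
      rw [conjTranspose_add, map_add, LinearMap.add_apply]
    _ ≤ ‖toEuclideanLin Aᴴ x‖ + ‖toEuclideanLin Bᴴ x‖ := norm_add_le _ _
    _ ≤ svalsDesc A i * ‖x‖ + svalsDesc B j * ‖x‖ := add_le_add (hA x hxW₁) (hB x hxW₂)
    _ = (svalsDesc A i + svalsDesc B j) * ‖x‖ := (add_mul _ _ _).symm

theorem sval_add_le (B : Matrix (Fin m) (Fin n) ℝ) {i j : ℕ} (hi : 1 ≤ i) (hj : 1 ≤ j)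
    (hij : i + j - 1 ≤ m) : sval (A + B) (i + j - 1) ≤ sval A i + sval B j := by
  rw [sval, sval, sval, dif_pos (by omega), dif_pos (by omega), dif_pos (by omega)]
  exact svalsDesc_add_le A B (by simp only; omega)

theorem svalsDesc_eq_of_mul_conjTranspose_eq {A B : Matrix (Fin m) (Fin n) ℝ}
    (h : A * Aᴴ = B * Bᴴ) : svalsDesc A = svalsDesc B := by
  unfold svalsDesc
  simp only
  rw! [h]
  rfl

theorem sval_neg (k : ℕ) : sval (-A) k = sval A k := by
  have hgram : -A * (-A)ᴴ = A * Aᴴ := by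
    rw [conjTranspose_neg, Matrix.neg_mul, Matrix.mul_neg, neg_neg]
  rw [sval, sval, svalsDesc_eq_of_mul_conjTranspose_eq hgram]

end SingularValues

theorem sq_le_two_mul_max_sq_add_two_mul_sq {a p q d : ℝ} (hp : a ≤ p + d) (hq : q - d ≤ a) :
    a ^ 2 ≤ 2 * max (p ^ 2) (q ^ 2) + 2 * d ^ 2 := by
  rcases le_total 0 a with ha | ha
  · nlinarith [le_max_left (p ^ 2) (q ^ 2), sq_nonneg (p - d)]
  · nlinarith [le_max_right (p ^ 2) (q ^ 2), sq_nonneg (q + d)]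

theorem median_sval_perturbation_general (m n : ℕ)
    (X M : Matrix (Fin m) (Fin n) ℝ) (k : ℕ) (hk1 : 1 ≤ k) (hk2 : k ≤ m / 2 - 1) :
    (sval X (m / 2) - sval (X - M) (m / 2)) ^ 2 ≤
      2 * max ((sval (X - M) (m / 2 - k) - sval (X - M) (m / 2)) ^ 2)
              ((sval (X - M) (m / 2 + k) - sval (X - M) (m / 2)) ^ 2)
        + 2 * (sval M (k + 1)) ^ 2 := by
  have hX : sval X (m / 2) ≤ sval (X - M) (m / 2 - k) + sval M (k + 1) := by
    have h := sval_add_le (X - M) M (i := m / 2 - k) (j := k + 1) (by omega) (by omega) (by omega)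
    rwa [sub_add_cancel, show m / 2 - k + (k + 1) - 1 = m / 2 by omega] at h
  have hXM : sval (X - M) (m / 2 + k) ≤ sval X (m / 2) + sval M (k + 1) := by
    have h := sval_add_le X (-M) (i := m / 2) (j := k + 1) (by omega) (by omega) (by omega)
    rwa [← sub_eq_add_neg, sval_neg, show m / 2 + (k + 1) - 1 = m / 2 + k by omega] at h
  exact sq_le_two_mul_max_sq_add_two_mul_sq (by linarith) (by linarith)

/-- Weyl-type bound for the median singular value.  Let `X`, `M` be
`m × n` real matrices (`m ≤ n`, `m` even) and let `1 ≤ k ≤ m/2 − 1`.  Then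
`(λ_{m/2}(X) − λ_{m/2}(X − M))² ≤
  2 max{(λ_{m/2−k}(X−M) − λ_{m/2}(X−M))², (λ_{m/2+k}(X−M) − λ_{m/2}(X−M))²}
  + 2 λ_{k+1}(M)²`. -/
theorem median_sval_perturbation (m n : ℕ) (hmn : m ≤ n) (hm : Even m)
    (X M : Matrix (Fin m) (Fin n) ℝ) (k : ℕ) (hk1 : 1 ≤ k) (hk2 : k ≤ m / 2 - 1) :
    (sval X (m / 2) - sval (X - M) (m / 2)) ^ 2 ≤
      2 * max ((sval (X - M) (m / 2 - k) - sval (X - M) (m / 2)) ^ 2)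
              ((sval (X - M) (m / 2 + k) - sval (X - M) (m / 2)) ^ 2)
        + 2 * (sval M (k + 1)) ^ 2 :=
  median_sval_perturbation_general m n X M k hk1 hk2

end
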